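/- Let V = V₁ ⊕ V₂ with a linear automorphism α of V₂ of finite order m, let γ act on V by γ(z₁, z₂) = (z₁ + b₁, α z₂ + b₂) for fixed b₁ ∈ V₁, b₂ ∈ V₂, and let H be a γ-invariant Hermitian form on V with H(w₂, w₁) = 0 for wᵢ ∈ Vᵢ. Set λ := γ^m = translation by m b₁ ∈ V₁. Then for the function f_γ(z) := ρ(λ)^{1/m} exp((π/m) H(z,λ) + (π/(2m²)) H(λ,λ)) (where ρ(λ)^{1/m} is a fixed m-th root), the product f_γ(γ^{m-1}z)···f_γ(γ z)f_γ(z) equals ρ(λ) exp(π H(z,λ) + (π/2) H(λ,λ)). -/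

import Mathlib

/-!
Pairing against `λ = (m b₁, 0)` kills the `V₂`-components, so `z ↦ H(z, λ)` only sees the
`V₁`-coordinate, which `γ` translates by `b₁`. Hence `H(γⁱ z, λ) = H(z, λ) + i H(b₁, λ)` and
`H(λ, λ) = m H(b₁, λ)`, and the exponents of the product form an arithmetic progression whose
sum `π H(z, λ) + (π/2) H(λ, λ)` comes from `∑_{i<m} i = m(m-1)/2`.
-/

theorem Function.iterate_map_eq_add_nsmul {X A : Type*} [AddMonoid A] {g : X → X} {p : X → A}
    {b : A} (h : ∀ x, p (g x) = p x + b) (n : ℕ) (x : X) : p (g^[n] x) = p x + n • b := by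
  simpa using (Function.Semiconj.iterate_right (f := p) (ga := g) (gb := (· + b)) h n).eq x

theorem AddMonoidHom.apply_eq_comp_inl_fst {M N P : Type*} [AddZeroClass M] [AddZeroClass N]
    [AddCommMonoid P] (φ : M × N →+ P) (h : ∀ n, φ (0, n) = 0) (x : M × N) :
    φ x = φ.comp (AddMonoidHom.inl M N) x.1 := by
  conv_lhs => rw [← φ.coprod_unique, coprod_apply]
  simp [h]

theorem Finset.sum_range_cast_mul_two {R : Type*} [CommRing R] (n : ℕ) :
    (∑ i ∈ range n, (i : R)) * 2 = n * (n - 1) := by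
  induction n with
  | zero => simp
  | succ n ih => rw [sum_range_succ, add_mul, ih]; push_cast; ring

theorem sum_range_div_mul_add_mul (m : ℕ) (hm : m ≠ 0) (κ a c : ℂ) :
    ∑ i ∈ Finset.range m, (κ / m * (a + i * c) + κ / (2 * m ^ 2) * (m * c)) =
      κ * a + κ / 2 * (m * c) := by
  have hm' : (m : ℂ) ≠ 0 := Nat.cast_ne_zero.mpr hm
  have hsum : ∑ i ∈ Finset.range m, (i : ℂ) = m * (m - 1) / 2 := by
    rw [eq_div_iff two_ne_zero, Finset.sum_range_cast_mul_two]
  simp only [Finset.sum_add_distrib, mul_add, Finset.sum_const, Finset.card_range, nsmul_eq_mul,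
    ← Finset.sum_mul, ← Finset.mul_sum, hsum]
  field_simp
  ring

theorem stmt_12_general (V₁ V₂ : Type) [AddCommGroup V₁] [Module ℂ V₁] [AddCommGroup V₂] [Module ℂ V₂]
    (α : V₂ ≃ₗ[ℂ] V₂) (m : ℕ) (hm : 0 < m)
    (b₁ : V₁) (b₂ : V₂)
    (γ : V₁ × V₂ → V₁ × V₂) (hγ : ∀ z : V₁ × V₂, γ z = (z.1 + b₁, α z.2 + b₂))
    (H : V₁ × V₂ → V₁ × V₂ → ℂ)
    (hadd1 : ∀ z z' w, H (z + z') w = H z w + H z' w)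
    (hvanish : ∀ (w₁ : V₁) (w₂ : V₂), H ((0 : V₁), w₂) (w₁, (0 : V₂)) = 0)
    (lam : V₁ × V₂) (hlam : lam = (m • b₁, (0 : V₂)))
    (rho r : ℂ) (hr : r ^ m = rho) :
    ∀ z : V₁ × V₂,
      (∏ i ∈ Finset.range m,
        (r * Complex.exp ((Real.pi : ℂ) / (m : ℂ) * H (γ^[i] z) lam +
            (Real.pi : ℂ) / (2 * (m : ℂ) ^ 2) * H lam lam))) =
      rho * Complex.exp ((Real.pi : ℂ) * H z lam + (Real.pi : ℂ) / 2 * H lam lam) := by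
  intro z
  let φ : V₁ × V₂ →+ ℂ := AddMonoidHom.mk' (H · lam) (hadd1 · · lam)
  let ψ : V₁ →+ ℂ := φ.comp (AddMonoidHom.inl V₁ V₂)
  have hψ (x : V₁ × V₂) : H x lam = ψ x.1 :=
    φ.apply_eq_comp_inl_fst (fun w₂ ↦ by simp only [φ, AddMonoidHom.mk'_apply, hlam, hvanish]) x
  have hiter (i : ℕ) : H (γ^[i] z) lam = H z lam + i * ψ b₁ := by
    have hfst : (γ^[i] z).1 = z.1 + i • b₁ :=
      Function.iterate_map_eq_add_nsmul (p := Prod.fst) (fun x ↦ by rw [hγ]) i z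
    rw [hψ, hψ, hfst, map_add, map_nsmul, nsmul_eq_mul]
  have hlamlam : H lam lam = m * ψ b₁ := by
    rw [hψ, hlam, map_nsmul, nsmul_eq_mul]
  rw [Finset.prod_mul_distrib, Finset.prod_const, Finset.card_range, hr, ← Complex.exp_sum]
  simp only [hiter, hlamlam]
  rw [sum_range_div_mul_add_mul m hm.ne']

/-- Bagnera–De Franchis cocycle extraction of an `m`-th root.
`V = V₁ ⊕ V₂`, `α` a linear automorphism of `V₂` of order (dividing) `m`,
`γ(z₁,z₂) = (z₁ + b₁, α z₂ + b₂)` with `γ^m` the translation by `λ := (m b₁, 0) ∈ V₁`,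
`H` a `γ`-invariant Hermitian form with `H(V₂, V₁) = 0`, and
`f_γ(z) := ρ(λ)^{1/m} exp((π/m) H(z,λ) + (π/(2m²)) H(λ,λ))` for a fixed `m`-th root
`r = ρ(λ)^{1/m}`.  Then `f_γ(γ^{m-1} z) ⋯ f_γ(γ z) f_γ(z) = ρ(λ) exp(π H(z,λ) + (π/2) H(λ,λ))`. -/
theorem stmt_12 (V₁ V₂ : Type) [AddCommGroup V₁] [Module ℂ V₁] [AddCommGroup V₂] [Module ℂ V₂]
    (α : V₂ ≃ₗ[ℂ] V₂) (m : ℕ) (hm : 0 < m) (hα : α ^ m = 1)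
    (b₁ : V₁) (b₂ : V₂)
    (γ : V₁ × V₂ → V₁ × V₂) (hγ : ∀ z : V₁ × V₂, γ z = (z.1 + b₁, α z.2 + b₂))
    (hb₂ : (∑ i ∈ Finset.range m, (α ^ i) b₂) = 0)
    (H : V₁ × V₂ → V₁ × V₂ → ℂ)
    (hadd1 : ∀ z z' w, H (z + z') w = H z w + H z' w)
    (hadd2 : ∀ z w w', H z (w + w') = H z w + H z w')
    (hconj : ∀ z w, H w z = (starRingEnd ℂ) (H z w))
    (hinv : ∀ z w : V₁ × V₂, H (z.1, α z.2) (w.1, α w.2) = H z w)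
    (hvanish : ∀ (w₁ : V₁) (w₂ : V₂), H ((0 : V₁), w₂) (w₁, (0 : V₂)) = 0)
    (lam : V₁ × V₂) (hlam : lam = (m • b₁, (0 : V₂)))
    (rho r : ℂ) (hr : r ^ m = rho) :
    ∀ z : V₁ × V₂,
      (∏ i ∈ Finset.range m,
        (r * Complex.exp ((Real.pi : ℂ) / (m : ℂ) * H (γ^[i] z) lam +
            (Real.pi : ℂ) / (2 * (m : ℂ) ^ 2) * H lam lam))) =
      rho * Complex.exp ((Real.pi : ℂ) * H z lam + (Real.pi : ℂ) / 2 * H lam lam) :=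
  stmt_12_general V₁ V₂ α m hm b₁ b₂ γ hγ H hadd1 hvanish lam hlam rho r hr
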